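/- Let n ≥ 1, let W be uniformly distributed on [0,1] and, conditionally on W = w, let X₁,…,Xₙ be i.i.d. Bernoulli(w). Take the loss ℓ(w,ŵ) = |w − ŵ|. Then the Bayesian risk R = inf_φ E[|W − φ(X₁,…,Xₙ)|], where the infimum is over all estimators φ : {0,1}ⁿ → ℝ, satisfies R ≥ 7/(72·√(πn)). -/

import Mathlib

open MeasureTheory ProbabilityTheory Real

/-- Hamming weight of `x ∈ {0,1}ⁿ`: the number of ones. -/
def hammingWt {n : ℕ} (x : Fin n → Bool) : ℕ := (Finset.univ.filter fun i => x i).card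

/-- The joint law of `(W, Xⁿ)` where `W ~ Uniform[0,1]` and, conditionally on
`W = w`, `X₁, …, Xₙ` are i.i.d. `Bernoulli(w)`:
`P(Xⁿ = xⁿ | W = w) = w^k (1-w)^(n-k)` with `k` the Hamming weight of `xⁿ`. -/
noncomputable def bernoulliJoint (n : ℕ) : Measure (ℝ × (Fin n → Bool)) :=
  ∑ x : Fin n → Bool,
    ((volume.restrict (Set.Icc (0 : ℝ) 1)).withDensity
        (fun w => ENNReal.ofReal (w ^ hammingWt x * (1 - w) ^ (n - hammingWt x)))).map
      (fun w => (w, x))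

section Aux

open Real Finset Stirling intervalIntegral
open scoped NNReal ENNReal

namespace BernoulliRisk


lemma betaJ (k m : ℕ) :
    ∫ x in (0:ℝ)..1, x ^ k * (1 - x) ^ m
      = (k.factorial * m.factorial : ℝ) / (k + m + 1).factorial := by
  induction m generalizing k with
  | zero =>
      simp only [pow_zero, mul_one, integral_pow]
      have : ((k:ℝ) + 1) ≠ 0 := by positivity
      rw [Nat.add_zero, Nat.factorial_succ]
      push_cast
      field_simp
      simp
  | succ m ih =>
      have key :
          ((m + 1 : ℝ) / (k + 1)) * ∫ x in (0:ℝ)..1, x ^ k * x * (1 - x) ^ m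
            = ∫ x in (0:ℝ)..1, x ^ k * ((1 - x) ^ m * (1 - x)) := by
        have hu : ∀ x ∈ Set.uIcc (0:ℝ) 1, HasDerivAt (fun y : ℝ => y ^ (k+1) / (k+1))
            (x ^ k) x := by
          intro x _
          have := (hasDerivAt_pow (k+1) x).div_const ((k:ℝ)+1)
          have hne : ((k:ℝ)+1) ≠ 0 := by positivity
          simpa [Nat.cast_add, mul_comm, mul_div_assoc, div_self hne] using this
        have hv : ∀ x ∈ Set.uIcc (0:ℝ) 1, HasDerivAt (fun y : ℝ => (1 - y) ^ (m+1))
            (-((m+1) * (1 - x) ^ m)) x := by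
          intro x _
          have h1 : HasDerivAt (fun y : ℝ => 1 - y) (-1) x := by
            simpa using (hasDerivAt_id x).const_sub (1:ℝ)
          have := (hasDerivAt_pow (m+1) (1 - x)).comp x h1
          simpa [mul_comm, mul_assoc, Function.comp_def] using this
        have hcu : IntervalIntegrable (fun x : ℝ => x ^ k) volume 0 1 :=
          (continuous_pow k).intervalIntegrable 0 1
        have hcv : IntervalIntegrable (fun x : ℝ => -((m+1) * (1 - x) ^ m)) volume 0 1 := by
          apply Continuous.intervalIntegrable; continuity
        have h := integral_mul_deriv_eq_deriv_mul hu hv hcu hcv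
        rw [intervalIntegral.integral_congr
          (g := fun x : ℝ => -((m+1)/(k+1) * (x ^ k * x * (1-x)^m))) (by
            intro x _; simp only; rw [pow_succ]; ring)] at h
        rw [intervalIntegral.integral_neg, intervalIntegral.integral_const_mul] at h
        simp only [one_pow, sub_self, zero_pow (Nat.succ_ne_zero m),
          zero_pow (Nat.succ_ne_zero k), zero_div, zero_mul, mul_zero, mul_one,
          neg_zero, zero_sub] at h
        have h2 : ∫ x in (0:ℝ)..1, x ^ k * (1 - x) ^ (m+1)
            = ∫ x in (0:ℝ)..1, x ^ k * ((1 - x) ^ m * (1 - x)) := by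
          apply intervalIntegral.integral_congr; intro x _; simp only; rw [pow_succ]
        rw [← h2]
        have := neg_injective h
        linarith [this]
      have h3 : ∫ x in (0:ℝ)..1, x ^ k * (1 - x) ^ (m+1)
          = ∫ x in (0:ℝ)..1, x ^ k * ((1 - x) ^ m * (1 - x)) := by
        apply intervalIntegral.integral_congr; intro x _; simp only; rw [pow_succ]
      have h4 : ∫ x in (0:ℝ)..1, x ^ (k+1) * (1 - x) ^ m
          = ∫ x in (0:ℝ)..1, x ^ k * x * (1 - x) ^ m := by
        apply intervalIntegral.integral_congr; intro x _; simp only; rw [pow_succ]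
      rw [h3, ← key, ← h4, ih (k + 1)]
      have h1 : ((k+1) + m + 1) = (k + (m+1) + 1) := by ring
      rw [h1]
      have hne : ((k:ℝ) + 1) ≠ 0 := by positivity
      have hfne : ((k + (m+1) + 1).factorial : ℝ) ≠ 0 := by
        exact_mod_cast Nat.factorial_ne_zero _
      rw [Nat.factorial_succ (m), Nat.factorial_succ k]
      push_cast
      field_simp


-- sup bound: for w ∈ [0,1], k + m ≥ 1, w^k (1-w)^m ≤ k^k m^m / (k+m)^(k+m)
lemma sup_bound (k m : ℕ) (hkm : 1 ≤ k + m) {w : ℝ} (hw0 : 0 ≤ w) (hw1 : w ≤ 1) :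
    w ^ k * (1 - w) ^ m * ((k + m : ℕ) : ℝ) ^ (k + m) ≤ (k : ℝ) ^ k * (m : ℝ) ^ m := by
  have h1w : (0:ℝ) ≤ 1 - w := by linarith
  rcases Nat.eq_zero_or_pos k with hk | hk
  · subst hk
    simp only [pow_zero, one_mul, zero_add, Nat.cast_id]
    calc (1 - w) ^ m * ((m:ℕ):ℝ) ^ m ≤ 1 * ((m:ℕ):ℝ) ^ m := by
          apply mul_le_mul_of_nonneg_right (pow_le_one₀ h1w (by linarith)) (by positivity)
      _ = (m:ℝ) ^ m := by simp
  rcases Nat.eq_zero_or_pos m with hm | hm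
  · subst hm
    simp only [pow_zero, mul_one, add_zero]
    calc w ^ k * ((k:ℕ):ℝ) ^ k ≤ 1 * ((k:ℕ):ℝ) ^ k := by
          apply mul_le_mul_of_nonneg_right (pow_le_one₀ hw0 hw1) (by positivity)
      _ = (k:ℝ) ^ k := by simp
  -- main case 0 < k, 0 < m
  have hkR : (0:ℝ) < k := by exact_mod_cast hk
  have hmR : (0:ℝ) < m := by exact_mod_cast hm
  have hnR : (0:ℝ) < (k:ℝ) + m := by linarith
  set p₁ : ℝ := ((k:ℝ) + m) * w / k with hp₁
  set p₂ : ℝ := ((k:ℝ) + m) * (1 - w) / m with hp₂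
  have hgm := Real.geom_mean_le_arith_mean2_weighted
    (le_of_lt (div_pos hkR hnR)) (le_of_lt (div_pos hmR hnR))
    (by positivity : (0:ℝ) ≤ p₁) (by positivity : (0:ℝ) ≤ p₂)
    (by field_simp)
  have harith : (k / ((k:ℝ)+m)) * p₁ + (m / ((k:ℝ)+m)) * p₂ = 1 := by
    rw [hp₁, hp₂]; field_simp; ring
  rw [harith] at hgm
  -- raise to the (k+m) power
  have hgm' : (p₁ ^ ((k:ℝ) / ((k:ℝ)+m)) * p₂ ^ ((m:ℝ) / ((k:ℝ)+m))) ^ ((k:ℝ)+m) ≤ 1 := by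
    calc (p₁ ^ ((k:ℝ) / ((k:ℝ)+m)) * p₂ ^ ((m:ℝ) / ((k:ℝ)+m))) ^ ((k:ℝ)+m)
        ≤ 1 ^ ((k:ℝ)+m) := by
          apply Real.rpow_le_rpow (by positivity) hgm (le_of_lt hnR)
      _ = 1 := Real.one_rpow _
  have hexpand : (p₁ ^ ((k:ℝ) / ((k:ℝ)+m)) * p₂ ^ ((m:ℝ) / ((k:ℝ)+m))) ^ ((k:ℝ)+m)
      = p₁ ^ (k:ℕ) * p₂ ^ (m:ℕ) := by
    rw [Real.mul_rpow (by positivity) (by positivity),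
      ← Real.rpow_natCast p₁ k, ← Real.rpow_natCast p₂ m,
      ← Real.rpow_mul (by positivity), ← Real.rpow_mul (by positivity)]
    rw [div_mul_cancel₀ _ (ne_of_gt hnR), div_mul_cancel₀ _ (ne_of_gt hnR)]
  rw [hexpand] at hgm'
  -- p₁^k p₂^m = w^k (1-w)^m (k+m)^(k+m) / (k^k m^m)
  have hkk : (0:ℝ) < (k:ℝ)^k := by positivity
  have hmm : (0:ℝ) < (m:ℝ)^m := by positivity
  have : p₁ ^ (k:ℕ) * p₂ ^ (m:ℕ)
      = w ^ k * (1 - w) ^ m * ((k:ℝ) + m) ^ (k + m) / ((k:ℝ)^k * (m:ℝ)^m) := by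
    rw [hp₁, hp₂, div_pow, div_pow, pow_add]
    rw [mul_pow, mul_pow]
    field_simp
  rw [this] at hgm'
  rw [div_le_one (by positivity)] at hgm'
  calc w ^ k * (1 - w) ^ m * ((k + m : ℕ) : ℝ) ^ (k + m)
      = w ^ k * (1 - w) ^ m * ((k:ℝ) + m) ^ (k + m) := by push_cast; ring
    _ ≤ (k:ℝ)^k * (m:ℝ)^m := hgm'


lemma chop (g : ℝ → ℝ) (hg : Continuous g) (h0 : ∀ w ∈ Set.Icc (0:ℝ) 1, 0 ≤ g w) (L : ℝ) (hL : 0 < L)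
    (hsup : ∀ w ∈ Set.Icc (0:ℝ) 1, g w ≤ L) (c : ℝ) :
    (∫ w in Set.Icc (0:ℝ) 1, g w) ^ 2 / (8 * L)
      ≤ ∫ w in Set.Icc (0:ℝ) 1, |w - c| * g w := by
  set M := ∫ w in Set.Icc (0:ℝ) 1, g w with hM
  have hMnn : 0 ≤ M := setIntegral_nonneg measurableSet_Icc (fun w hw => h0 w hw)
  rcases eq_or_lt_of_le hMnn with hM0 | hMpos
  · rw [← hM0]
    simp only [ne_eq, OfNat.ofNat_ne_zero, not_false_eq_true, zero_pow, zero_div]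
    exact setIntegral_nonneg measurableSet_Icc (fun w hw => mul_nonneg (abs_nonneg _) (h0 w hw))
  set t := M / (4 * L) with ht
  have htpos : 0 < t := by positivity
  -- pointwise bound
  have hpt : ∀ w ∈ Set.Icc (0:ℝ) 1,
      t * g w - (Set.Ioo (c - t) (c + t)).indicator (fun _ => t * L) w ≤ |w - c| * g w := by
    intro w hw
    by_cases hmem : w ∈ Set.Ioo (c - t) (c + t)
    · rw [Set.indicator_of_mem hmem]
      have : t * g w - t * L ≤ 0 := by
        have := hsup w hw
        nlinarith [h0 w hw]
      nlinarith [abs_nonneg (w - c), h0 w hw]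
    · rw [Set.indicator_of_notMem hmem, sub_zero]
      have : t ≤ |w - c| := by
        simp only [Set.mem_Ioo, not_and_or, not_lt] at hmem
        rcases hmem with h | h
        · rw [abs_sub_comm]; rw [abs_of_nonneg (by linarith)]; linarith
        · rw [abs_of_nonneg (by linarith)]; linarith
      exact mul_le_mul_of_nonneg_right this (h0 w hw) |>.trans_eq rfl |>.trans
        (mul_le_mul_of_nonneg_right le_rfl (h0 w hw))
  -- integrability
  have hig : IntegrableOn g (Set.Icc (0:ℝ) 1) volume := hg.integrableOn_Icc
  have hind : IntegrableOn ((Set.Ioo (c - t) (c + t)).indicator (fun _ => t * L))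
      (Set.Icc (0:ℝ) 1) volume := by
    apply Integrable.indicator _ measurableSet_Ioo
    exact integrableOn_const (by rw [Real.volume_Icc]; norm_num)
  have habs : IntegrableOn (fun w => |w - c| * g w) (Set.Icc (0:ℝ) 1) volume := by
    apply Continuous.integrableOn_Icc
    exact ((continuous_id.sub continuous_const).abs).mul hg
  have hmono : ∫ w in Set.Icc (0:ℝ) 1,
        (t * g w - (Set.Ioo (c - t) (c + t)).indicator (fun _ => t * L) w)
      ≤ ∫ w in Set.Icc (0:ℝ) 1, |w - c| * g w := by
    apply setIntegral_mono_on _ habs measurableSet_Icc hpt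
    exact (hig.const_mul t).sub hind
  have hsplit : ∫ w in Set.Icc (0:ℝ) 1,
        (t * g w - (Set.Ioo (c - t) (c + t)).indicator (fun _ => t * L) w)
      = t * M - ∫ w in Set.Icc (0:ℝ) 1,
          (Set.Ioo (c - t) (c + t)).indicator (fun _ => t * L) w := by
    rw [integral_sub (hig.const_mul t) hind, MeasureTheory.integral_const_mul]
  have hindval : ∫ w in Set.Icc (0:ℝ) 1,
        (Set.Ioo (c - t) (c + t)).indicator (fun _ => t * L) w ≤ 2 * t * (t * L) := by
    rw [MeasureTheory.integral_indicator measurableSet_Ioo]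
    rw [Measure.restrict_restrict measurableSet_Ioo]
    rw [setIntegral_const]
    have hvol : (volume (Set.Ioo (c - t) (c + t) ∩ Set.Icc 0 1)).toReal ≤ 2 * t := by
      have h1 : volume (Set.Ioo (c - t) (c + t) ∩ Set.Icc 0 1) ≤ volume (Set.Ioo (c - t) (c + t)) :=
        measure_mono Set.inter_subset_left
      rw [Real.volume_Ioo] at h1
      have h2 : (volume (Set.Ioo (c - t) (c + t) ∩ Set.Icc 0 1)).toReal
          ≤ (ENNReal.ofReal (c + t - (c - t))).toReal := by
        apply ENNReal.toReal_mono _ h1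
        simp
      rw [ENNReal.toReal_ofReal (by linarith)] at h2
      linarith
    calc (volume (Set.Ioo (c - t) (c + t) ∩ Set.Icc 0 1)).toReal • (t * L)
        = (volume (Set.Ioo (c - t) (c + t) ∩ Set.Icc 0 1)).toReal * (t * L) := by rw [smul_eq_mul]
      _ ≤ (2 * t) * (t * L) := by
          apply mul_le_mul_of_nonneg_right hvol (by positivity)
      _ = 2 * t * (t * L) := by ring
  have : t * M - 2 * t * (t * L) ≤ ∫ w in Set.Icc (0:ℝ) 1, |w - c| * g w := by
    rw [hsplit] at hmono; linarith
  have heq : t * M - 2 * t * (t * L) = M ^ 2 / (8 * L) := by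
    rw [ht]; field_simp; ring
  linarith

lemma risk_decomp (n : ℕ) (φ : (Fin n → Bool) → ℝ) (hφ : Measurable φ) :
    ∫ q, |q.1 - φ q.2| ∂(bernoulliJoint n)
      = ∑ x : Fin n → Bool, ∫ w in Set.Icc (0:ℝ) 1,
          |w - φ x| * (w ^ hammingWt x * (1 - w) ^ (n - hammingWt x)) := by
  have hfm : Measurable (fun q : ℝ × (Fin n → Bool) => |q.1 - φ q.2|) :=
    (measurable_fst.sub (hφ.comp measurable_snd)).abs
  have key : ∀ x : Fin n → Bool,
      ∫ q, |q.1 - φ q.2|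
        ∂(((volume.restrict (Set.Icc (0 : ℝ) 1)).withDensity
            (fun w => ENNReal.ofReal (w ^ hammingWt x * (1 - w) ^ (n - hammingWt x)))).map
          (fun w => (w, x)))
      = ∫ w in Set.Icc (0:ℝ) 1,
          |w - φ x| * (w ^ hammingWt x * (1 - w) ^ (n - hammingWt x)) := by
    intro x
    set k := hammingWt x
    set gx : ℝ → ℝ≥0 := fun w => (w ^ k * (1 - w) ^ (n - k)).toNNReal with hgx
    have hgxm : Measurable gx := by
      apply Measurable.real_toNNReal
      exact ((measurable_id.pow_const k).mul
        ((measurable_const.sub measurable_id).pow_const (n - k)))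
    have hmape : Measurable (fun w : ℝ => (w, x)) := measurable_id.prodMk measurable_const
    rw [integral_map hmape.aemeasurable hfm.aestronglyMeasurable]
    have hden : (fun w : ℝ => ENNReal.ofReal (w ^ k * (1 - w) ^ (n - k)))
        = fun w => (gx w : ℝ≥0∞) := rfl
    rw [hden, integral_withDensity_eq_integral_smul hgxm]
    apply setIntegral_congr_fun measurableSet_Icc
    intro w hw
    simp only [NNReal.smul_def, smul_eq_mul, hgx]
    rw [Real.coe_toNNReal _ (mul_nonneg (pow_nonneg hw.1 _)
      (pow_nonneg (by linarith [hw.2]) _))]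
    ring
  rw [bernoulliJoint, integral_finset_sum_measure]
  · exact Finset.sum_congr rfl fun x _ => key x
  · intro x _
    set k := hammingWt x
    set gx : ℝ → ℝ≥0 := fun w => (w ^ k * (1 - w) ^ (n - k)).toNNReal with hgx
    have hgxm : Measurable gx := by
      apply Measurable.real_toNNReal
      exact ((measurable_id.pow_const k).mul
        ((measurable_const.sub measurable_id).pow_const (n - k)))
    have hmape : Measurable (fun w : ℝ => (w, x)) := measurable_id.prodMk measurable_const
    have hden : (fun w : ℝ => ENNReal.ofReal (w ^ k * (1 - w) ^ (n - k)))
        = fun w => (gx w : ℝ≥0∞) := rfl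
    rw [hden]
    rw [integrable_map_measure hfm.aestronglyMeasurable hmape.aemeasurable]
    have : ((fun q : ℝ × (Fin n → Bool) => |q.1 - φ q.2|) ∘ (fun w : ℝ => (w, x)))
        = fun w => |w - φ x| := rfl
    rw [this, integrable_withDensity_iff_integrable_smul hgxm]
    apply Continuous.integrableOn_Icc
    have hc : Continuous fun w : ℝ => ((w ^ k * (1 - w) ^ (n - k)).toNNReal : ℝ) := by
      simp only [Real.coe_toNNReal']
      apply Continuous.max _ continuous_const
      exact (continuous_pow k).mul ((continuous_const.sub continuous_id).pow (n - k))
    exact (hc.smul ((continuous_id.sub continuous_const).abs) : _)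

def boolFunEquivFinset (n : ℕ) : (Fin n → Bool) ≃ Finset (Fin n) where
  toFun := fun x => Finset.univ.filter (fun i => x i)
  invFun := fun s => fun i => decide (i ∈ s)
  left_inv := by intro x; funext i; simp
  right_inv := by intro s; ext i; simp

lemma sum_hamming (n : ℕ) (F : ℕ → ℝ) :
    ∑ x : Fin n → Bool, F (hammingWt x)
      = ∑ k ∈ Finset.range (n + 1), (n.choose k : ℝ) * F k := by
  rw [← Equiv.sum_comp (boolFunEquivFinset n).symm (fun x => F (hammingWt x))]
  have h1 : ∀ s : Finset (Fin n), F (hammingWt ((boolFunEquivFinset n).symm s)) = F s.card := by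
    intro s
    congr 1
    show (Finset.univ.filter fun i => decide (i ∈ s) = true).card = s.card
    congr 1
    ext i; simp
  simp_rw [h1]
  have h2 : (Finset.univ : Finset (Finset (Fin n))) = (Finset.univ : Finset (Fin n)).powerset :=
    Finset.powerset_univ.symm
  rw [h2, Finset.sum_powerset_apply_card]
  simp [Finset.card_univ, nsmul_eq_mul]


lemma stirling_denom_pos {j : ℕ} (hj : 1 ≤ j) : 0 < √(2 * j : ℝ) * ((j : ℝ) / exp 1) ^ j := by
  have : (0:ℝ) < j := by exact_mod_cast hj
  positivity

lemma fact_lower (j : ℕ) (hj : 1 ≤ j) :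
    √π * (√(2 * j : ℝ) * ((j : ℝ) / exp 1) ^ j) ≤ (j.factorial : ℝ) := by
  have hlb : √π ≤ stirlingSeq j := by
    obtain ⟨j', rfl⟩ := Nat.exists_eq_add_of_le hj
    have := stirlingSeq'_antitone.le_of_tendsto
      (by
        have := tendsto_stirlingSeq_sqrt_pi
        exact this.comp (Filter.tendsto_add_atTop_nat 1)) j'
    simpa [Function.comp, Nat.succ_eq_add_one, Nat.add_comm] using this
  have hd := stirling_denom_pos hj
  rw [stirlingSeq, le_div_iff₀ hd] at hlb
  exact hlb

lemma fact_upper (j : ℕ) (hj : 1 ≤ j) :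
    (j.factorial : ℝ) ≤ (exp 1 / √2) * (√(2 * j : ℝ) * ((j : ℝ) / exp 1) ^ j) := by
  have hub : stirlingSeq j ≤ exp 1 / √2 := by
    obtain ⟨j', rfl⟩ := Nat.exists_eq_add_of_le hj
    have := stirlingSeq'_antitone (Nat.zero_le j')
    simpa [Function.comp, stirlingSeq_one, Nat.add_comm] using this
  have hd := stirling_denom_pos hj
  rw [stirlingSeq, div_le_iff₀ hd] at hub
  exact hub

noncomputable def Fk (n k : ℕ) : ℝ :=
  ((k.factorial * (n - k).factorial : ℝ) / ((n + 1).factorial : ℝ)) ^ 2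
    / (8 * ((k : ℝ) ^ k * ((n - k : ℕ) : ℝ) ^ (n - k) / (n : ℝ) ^ n))

lemma pow_self_pos (k : ℕ) : (0:ℝ) < (k:ℝ) ^ k := by
  cases k with
  | zero => simp
  | succ j => positivity

lemma Fk_nonneg (n k : ℕ) : 0 ≤ Fk n k := by
  apply div_nonneg (sq_nonneg _)
  have h1 := (pow_self_pos k).le
  have h2 := (pow_self_pos (n - k)).le
  have h3 : (0:ℝ) ≤ (n:ℝ) ^ n := by positivity
  positivity

lemma sum_id_real (n : ℕ) : ∑ k ∈ range (n + 1), (k : ℝ) = n * (n + 1) / 2 := by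
  induction n with
  | zero => simp
  | succ m ih => rw [sum_range_succ, ih]; push_cast; ring

lemma sum_sq_real (n : ℕ) : ∑ k ∈ range (n + 1), (k : ℝ)^2 = n * (n + 1) * (2*n+1) / 6 := by
  induction n with
  | zero => simp
  | succ m ih => rw [sum_range_succ, ih]; push_cast; ring

lemma sum_k_mul' (n : ℕ) :
    ∑ k ∈ range (n + 1), (k : ℝ) * ((n : ℝ) - k)
      = (n : ℝ) * ((n:ℝ) + 1) * ((n:ℝ) - 1) / 6 := by
  have : ∀ k ∈ range (n+1), (k : ℝ) * ((n : ℝ) - k) = (n:ℝ) * k - (k:ℝ)^2 := by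
    intro k _; ring
  rw [sum_congr rfl this, sum_sub_distrib, ← mul_sum, sum_id_real, sum_sq_real]
  ring

set_option maxHeartbeats 1000000 in
lemma stepA (n k : ℕ) (hk1 : 1 ≤ k) (hkn : k + 1 ≤ n) :
    π * k * ((n : ℝ) - k) / (2 * exp 1 * n * ((n:ℝ)+1)^2 * √n)
      ≤ (n.choose k : ℝ) * Fk n k := by
  have hk_le : k ≤ n := le_of_lt hkn
  have hm1 : 1 ≤ n - k := by omega
  have hn1 : 1 ≤ n := by omega
  set E : ℝ := exp 1 with hEdef
  set K : ℝ := (k : ℝ) with hK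
  set Mk : ℝ := ((n - k : ℕ) : ℝ) with hMk
  have hMkval : Mk = (n : ℝ) - K := by rw [hMk, hK, Nat.cast_sub hk_le]
  have hKpos : 0 < K := by rw [hK]; exact_mod_cast hk1
  have hMpos : 0 < Mk := by rw [hMk]; exact_mod_cast hm1
  have hnpos : (0:ℝ) < n := by exact_mod_cast hn1
  have hE : (0:ℝ) < E := exp_pos 1
  have ha := fact_lower k hk1
  have hb := fact_lower (n - k) hm1
  have hc := fact_upper n hn1
  set a : ℝ := (k.factorial : ℝ) with hadef
  set b : ℝ := ((n - k).factorial : ℝ) with hbdef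
  set c : ℝ := (n.factorial : ℝ) with hcdef
  have hapos : 0 < a := by rw [hadef]; exact_mod_cast k.factorial_pos
  have hbpos : 0 < b := by rw [hbdef]; exact_mod_cast (n-k).factorial_pos
  have hcpos : 0 < c := by rw [hcdef]; exact_mod_cast n.factorial_pos
  have hKk : (0:ℝ) < K ^ k := pow_pos hKpos k
  have hMkk : (0:ℝ) < Mk ^ (n - k) := pow_pos hMpos (n - k)
  have hnn : (0:ℝ) < (n:ℝ)^n := pow_pos hnpos n
  have hEn : (0:ℝ) < E^n := pow_pos hE n
  have hsn : (0:ℝ) < √(n:ℝ) := Real.sqrt_pos.mpr hnpos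
  have hsK : (0:ℝ) < √K := Real.sqrt_pos.mpr hKpos
  have hsM : (0:ℝ) < √Mk := Real.sqrt_pos.mpr hMpos
  -- identity for choose * Fk
  have hid : (n.choose k : ℝ) * Fk n k
      = a * b * (n:ℝ)^n / (8 * ((n:ℝ)+1)^2 * c * (K ^ k * Mk ^ (n - k))) := by
    rw [Fk, Nat.cast_choose ℝ hk_le, Nat.factorial_succ]
    rw [← hadef, ← hbdef, ← hcdef, ← hK, ← hMk]
    push_cast
    field_simp
    ring
  rw [hid]
  -- Stirling-based lower bound pieces, in simplified form
  have hpipi : √π * √π = π := Real.mul_self_sqrt (le_of_lt pi_pos)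
  have h2 : √2 * √2 = 2 := Real.mul_self_sqrt (by norm_num)
  have hEexp : E ^ k * E ^ (n - k) = E ^ n := by
    rw [← pow_add]; congr 1; omega
  have hsq2 : √(2*K) = √2 * √K := Real.sqrt_mul (by norm_num) K
  have hsqM : √(2*Mk) = √2 * √Mk := Real.sqrt_mul (by norm_num) Mk
  have hsqn : √(2*(n:ℝ)) = √2 * √(n:ℝ) := Real.sqrt_mul (by norm_num) (n:ℝ)
  have hnum : π * 2 * (√K * √Mk) * (K ^ k * Mk ^ (n-k)) / E^n ≤ a * b := by
    have heq : √π * (√(2*K) * (K / E) ^ k) * (√π * (√(2*Mk) * (Mk / E) ^ (n-k)))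
        = π * 2 * (√K * √Mk) * (K ^ k * Mk ^ (n-k)) / E^n := by
      calc √π * (√(2*K) * (K / E) ^ k) * (√π * (√(2*Mk) * (Mk / E) ^ (n-k)))
          = (√π * √π) * ((√2 * √2) * (√K * √Mk) * (K ^ k * Mk ^ (n-k)) / (E^k * E^(n-k))) := by
            rw [hsq2, hsqM, div_pow, div_pow]
            field_simp
        _ = π * 2 * (√K * √Mk) * (K ^ k * Mk ^ (n-k)) / E^n := by
            rw [hpipi, h2, hEexp]; ring
    rw [← heq]
    apply mul_le_mul _ _ (by positivity) (le_of_lt hapos)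
    · simpa [hK] using ha
    · simpa [hMk] using hb
  have hden : c ≤ E * √(n:ℝ) * (n:ℝ)^n / E^n := by
    have heq : (E / √2) * (√(2*(n:ℝ)) * ((n:ℝ) / E) ^ n) = E * √(n:ℝ) * (n:ℝ)^n / E^n := by
      rw [hsqn, div_pow]
      have hs2 : (0:ℝ) < √2 := by positivity
      field_simp
    rw [← heq]
    simpa using hc
  have hdenpos : (0:ℝ) < 8 * ((n:ℝ)+1)^2 * c * (K ^ k * Mk ^ (n - k)) := by positivity
  have hquot : (π * 2 * (√K * √Mk) * (K ^ k * Mk ^ (n-k)) / E^n) * (n:ℝ)^n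
        / (8 * ((n:ℝ)+1)^2 * (E * √(n:ℝ) * (n:ℝ)^n / E^n) * (K ^ k * Mk ^ (n - k)))
      ≤ a * b * (n:ℝ)^n / (8 * ((n:ℝ)+1)^2 * c * (K ^ k * Mk ^ (n - k))) := by
    apply div_le_div₀ (by positivity)
      (mul_le_mul_of_nonneg_right hnum (by positivity)) hdenpos
    apply mul_le_mul_of_nonneg_right _ (by positivity)
    exact mul_le_mul_of_nonneg_left hden (by positivity)
  refine le_trans ?_ hquot
  have hsimp : (π * 2 * (√K * √Mk) * (K ^ k * Mk ^ (n-k)) / E^n) * (n:ℝ)^n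
        / (8 * ((n:ℝ)+1)^2 * (E * √(n:ℝ) * (n:ℝ)^n / E^n) * (K ^ k * Mk ^ (n - k)))
      = π * (√K * √Mk) / (4 * E * ((n:ℝ)+1)^2 * √(n:ℝ)) := by
    field_simp
    ring
  rw [hsimp]
  -- finally √K √Mk ≥ 2 K Mk / n
  have hsqrt : 2 * K * Mk / (n:ℝ) ≤ √K * √Mk := by
    rw [← Real.sqrt_mul (le_of_lt hKpos)]
    rw [Real.le_sqrt (by positivity) (by positivity)]
    rw [div_pow, div_le_iff₀ (by positivity)]
    have h4 : 4 * (K * Mk) ≤ (n:ℝ)^2 := by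
      rw [hMkval]; nlinarith [sq_nonneg ((n:ℝ) - 2*K)]
    nlinarith [mul_le_mul_of_nonneg_left h4 (le_of_lt (mul_pos hKpos hMpos))]
  calc π * k * ((n : ℝ) - k) / (2 * E * n * ((n:ℝ)+1)^2 * √n)
      = (π / (4 * E * ((n:ℝ)+1)^2 * √(n:ℝ))) * (2 * K * Mk / (n:ℝ)) := by
        rw [hMkval, hK]
        field_simp
        ring
    _ ≤ (π / (4 * E * ((n:ℝ)+1)^2 * √(n:ℝ))) * (√K * √Mk) := by
        apply mul_le_mul_of_nonneg_left hsqrt (by positivity)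
    _ = π * (√K * √Mk) / (4 * E * ((n:ℝ)+1)^2 * √(n:ℝ)) := by ring

lemma bound_helper (n : ℕ) (r b : ℝ) (hb : 0 < b) (hsq : b^2 ≤ π*n) (hr : 7/(72*b) ≤ r) :
    7/(72*√(π*n)) ≤ r := by
  have hpn : (0:ℝ) ≤ π * n := le_trans (by positivity) hsq
  have h1 : b ≤ √(π*n) := (Real.le_sqrt hb.le hpn).mpr hsq
  have h2 : 7/(72*√(π*n)) ≤ 7/(72*b) := by
    rw [div_le_div_iff₀ (mul_pos (by norm_num) (lt_of_lt_of_le hb h1)) (mul_pos (by norm_num) hb)]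
    nlinarith [h1]
  linarith

lemma arith_ge4 (n : ℕ) (hn : 4 ≤ n) :
    7 / (72 * √(π * n)) ≤ ∑ k ∈ range (n + 1), (n.choose k : ℝ) * Fk n k := by
  have hn1 : 1 ≤ n := by omega
  have hnpos : (0:ℝ) < n := by exact_mod_cast hn1
  have hn4 : (4:ℝ) ≤ n := by exact_mod_cast hn
  have hE : (0:ℝ) < exp 1 := exp_pos 1
  have hsn : (0:ℝ) < √(n:ℝ) := Real.sqrt_pos.mpr hnpos
  set D : ℝ := 2 * exp 1 * n * ((n:ℝ)+1)^2 * √n with hD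
  have hDpos : 0 < D := by rw [hD]; positivity
  have hstep : ∀ k ∈ range (n+1),
      π * k * ((n:ℝ) - k) / D ≤ (n.choose k : ℝ) * Fk n k := by
    intro k hk
    rw [mem_range] at hk
    rcases Nat.eq_zero_or_pos k with rfl | hk1
    · simp only [Nat.cast_zero, mul_zero, zero_mul, zero_div, mul_zero]
      exact mul_nonneg (Nat.cast_nonneg _) (Fk_nonneg n 0)
    rcases eq_or_lt_of_le (Nat.lt_succ_iff.mp hk) with rfl | hkn
    · rw [show π * k * ((k:ℝ) - k) / D = 0 by ring]
      exact mul_nonneg (Nat.cast_nonneg _) (Fk_nonneg k k)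
    · exact stepA n k hk1 hkn
  have hsum := Finset.sum_le_sum hstep
  have hLHS : ∑ k ∈ range (n+1), π * k * ((n:ℝ) - k) / D
      = (π / D) * ((n : ℝ) * ((n:ℝ) + 1) * ((n:ℝ) - 1) / 6) := by
    rw [← sum_k_mul' n, mul_sum]
    apply sum_congr rfl
    intro k _
    ring
  rw [hLHS] at hsum
  refine le_trans ?_ hsum
  -- numeric part
  have hpiB : (3.141592:ℝ) ≤ π := by linarith [Real.pi_gt_d6]
  have hspB : (1.772453:ℝ) ≤ √π := by
    rw [Real.le_sqrt (by norm_num) (le_of_lt pi_pos)]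
    nlinarith [hpiB]
  have hEB : exp 1 ≤ 2.7182818286 := (Real.exp_one_lt_d9).le
  have hps : (5.568:ℝ) ≤ π * √π := by nlinarith [hpiB, hspB]
  have hkey : 84 * exp 1 * ((n:ℝ)+1) ≤ 72 * (π * √π) * ((n:ℝ)-1) := by
    have h1 : (5.568:ℝ) * ((n:ℝ)-1) ≤ (π * √π) * ((n:ℝ)-1) :=
      mul_le_mul_of_nonneg_right hps (by linarith)
    have h2 : exp 1 * ((n:ℝ)+1) ≤ 2.7182818286 * ((n:ℝ)+1) :=
      mul_le_mul_of_nonneg_right hEB (by linarith)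
    nlinarith [h1, h2]
  have hsqpn : √(π * n) = √π * √n := Real.sqrt_mul (le_of_lt pi_pos) _
  have hRHS : π / D * ((n:ℝ) * ((n:ℝ)+1) * ((n:ℝ)-1) / 6)
      = π * ((n:ℝ)-1) / (12 * exp 1 * ((n:ℝ)+1) * √n) := by
    rw [hD]
    field_simp
    ring
  rw [hRHS, hsqpn]
  rw [div_le_div_iff₀ (by positivity) (by positivity)]
  calc 7 * (12 * exp 1 * ((n:ℝ)+1) * √n) = (84 * exp 1 * ((n:ℝ)+1)) * √n := by ring
    _ ≤ (72 * (π * √π) * ((n:ℝ)-1)) * √n := mul_le_mul_of_nonneg_right hkey hsn.le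
    _ = π * ((n:ℝ)-1) * (72 * (√π * √n)) := by ring

lemma arith_main (n : ℕ) (hn : 1 ≤ n) :
    7 / (72 * √(π * n)) ≤ ∑ k ∈ range (n + 1), (n.choose k : ℝ) * Fk n k := by
  rcases lt_or_ge n 4 with h4 | h4
  · interval_cases n
    · apply bound_helper 1 _ (14/9) (by norm_num)
      · push_cast; nlinarith [Real.pi_gt_three]
      · rw [Finset.sum_range_succ, Finset.sum_range_succ, Finset.sum_range_zero]
        norm_num [Fk, Nat.factorial]
    · apply bound_helper 2 _ (7/4) (by norm_num)
      · push_cast; nlinarith [Real.pi_gt_three]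
      · rw [Finset.sum_range_succ, Finset.sum_range_succ, Finset.sum_range_succ,
          Finset.sum_range_zero]
        norm_num [Fk, Nat.factorial, Nat.choose]
    · apply bound_helper 3 _ (224/117) (by norm_num)
      · push_cast; nlinarith [Real.pi_gt_three]
      · rw [Finset.sum_range_succ, Finset.sum_range_succ, Finset.sum_range_succ,
          Finset.sum_range_succ, Finset.sum_range_zero]
        norm_num [Fk, Nat.factorial, Nat.choose]
  · exact arith_ge4 n h4

lemma hammingWt_le {n : ℕ} (x : Fin n → Bool) : hammingWt x ≤ n := by
  have h := Finset.card_filter_le (Finset.univ : Finset (Fin n)) (fun i => x i = true)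
  simpa [hammingWt] using h

lemma term_bound (n : ℕ) (hn : 1 ≤ n) (x : Fin n → Bool) (c : ℝ) :
    Fk n (hammingWt x) ≤ ∫ w in Set.Icc (0:ℝ) 1,
      |w - c| * (w ^ hammingWt x * (1 - w) ^ (n - hammingWt x)) := by
  set k := hammingWt x with hkdef
  have hk_le : k ≤ n := hammingWt_le x
  have hnpos : (0:ℝ) < n := by exact_mod_cast hn
  set L : ℝ := (k : ℝ) ^ k * ((n - k : ℕ) : ℝ) ^ (n - k) / (n : ℝ) ^ n with hL
  have hLpos : 0 < L := by
    rw [hL]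
    have h1 := pow_self_pos k
    have h2 := pow_self_pos (n - k)
    positivity
  have hadd : k + (n - k) = n := by omega
  have hsupb : ∀ w ∈ Set.Icc (0:ℝ) 1, w ^ k * (1 - w) ^ (n - k) ≤ L := by
    intro w hw
    have := sup_bound k (n - k) (by omega) hw.1 hw.2
    rw [hadd] at this
    rw [hL, le_div_iff₀ (by positivity)]
    exact this
  have hcont : Continuous fun w : ℝ => w ^ k * (1 - w) ^ (n - k) :=
    (continuous_pow k).mul ((continuous_const.sub continuous_id).pow (n - k))
  have h0 : ∀ w ∈ Set.Icc (0:ℝ) 1, 0 ≤ w ^ k * (1 - w) ^ (n - k) := by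
    intro w hw
    have h1 : (0:ℝ) ≤ 1 - w := by linarith [hw.2]
    have h2 := hw.1
    positivity
  have hchop := chop (fun w => w ^ k * (1 - w) ^ (n - k)) hcont h0 L hLpos hsupb c
  have hM : ∫ w in Set.Icc (0:ℝ) 1, w ^ k * (1 - w) ^ (n - k)
      = (k.factorial * (n - k).factorial : ℝ) / ((n + 1).factorial : ℝ) := by
    rw [MeasureTheory.integral_Icc_eq_integral_Ioc,
      ← intervalIntegral.integral_of_le (by norm_num : (0:ℝ) ≤ 1), betaJ k (n - k)]
    rw [show k + (n - k) + 1 = n + 1 by omega]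
  rw [hM] at hchop
  refine le_trans ?_ hchop
  rw [Fk, hL]

end BernoulliRisk

end Aux

/-- **Corollary 3 (lower bound on the Bayesian risk for Bernoulli bias
estimation).**  With `W ~ Uniform[0,1]`, `X₁, …, Xₙ` conditionally i.i.d.
`Bernoulli(W)` (`n ≥ 1`), and absolute loss `ℓ(w,ŵ) = |w - ŵ|`, the Bayesian
risk `R = inf_φ E[|W - φ(Xⁿ)|]` satisfies `R ≥ 7 / (72 √(πn))`. -/
theorem bernoulli_bayes_risk_lower_bound (n : ℕ) (hn : 1 ≤ n) :
    -- the joint law of `(W, Xⁿ)`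
    let μ : Measure (ℝ × (Fin n → Bool)) := bernoulliJoint n
    -- the Bayesian risk `R = inf_φ E[|W - φ(Xⁿ)|]` over all estimators `φ`
    let R : ℝ :=
      sInf {r : ℝ | ∃ φ : (Fin n → Bool) → ℝ,
        Measurable φ ∧ r = ∫ q, |q.1 - φ q.2| ∂μ}
    7 / (72 * Real.sqrt (π * n)) ≤ R := by
  intro μ R
  apply le_csInf
  · exact ⟨_, ⟨fun _ => (0:ℝ), measurable_const, rfl⟩⟩
  · rintro r ⟨φ, hφ, rfl⟩
    rw [show μ = bernoulliJoint n from rfl, BernoulliRisk.risk_decomp n φ hφ]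
    calc 7 / (72 * Real.sqrt (π * n))
        ≤ ∑ k ∈ Finset.range (n + 1), (n.choose k : ℝ) * BernoulliRisk.Fk n k :=
          BernoulliRisk.arith_main n hn
      _ = ∑ x : Fin n → Bool, BernoulliRisk.Fk n (hammingWt x) :=
          (BernoulliRisk.sum_hamming n (BernoulliRisk.Fk n)).symm
      _ ≤ ∑ x : Fin n → Bool, ∫ w in Set.Icc (0:ℝ) 1,
            |w - φ x| * (w ^ hammingWt x * (1 - w) ^ (n - hammingWt x)) :=
          Finset.sum_le_sum fun x _ => BernoulliRisk.term_bound n hn x (φ x)
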